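/- Let d = 3 and define the local rule f : Fin 3 → Fin 3 → Fin 3 → Fin 3 by f x y z = z if y ∈ {0,1}, and, if y = 2, f x 2 z = τ z where τ 0 = 1, τ 1 = 0, τ 2 = 2 (the 3-state CA rule 201210210201210210201210210). Then for every n ≥ 3, the global map F of the n-cell periodic-boundary CA is bijective. -/

import Mathlib

/-!
With `σ` the transposition `(0 1)`, the rule reads `f18 x y z = if y = 2 then σ z else z`, so
an output cell `F c i` equals `2` exactly when `c (i + 1)` does. The positions of the `2`s of `c`
can therefore be read off `F c`, and then `c (i + 1)` is `σ (F c i)` or `F c i` according as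
`F c (i - 1)` is `2` or not. This gives an explicit two-sided inverse.
-/

def f18 : Fin 3 → Fin 3 → Fin 3 → Fin 3 :=
  fun _ y z => if y = 0 ∨ y = 1 then z else ![1, 0, 2] z

lemma f18_eq_ite (x y z : Fin 3) : f18 x y z = if y = 2 then Equiv.swap 0 1 z else z := by
  revert x y z; decide

lemma swap_zero_one_eq_two_iff {z : Fin 3} : Equiv.swap 0 1 z = 2 ↔ z = 2 := by
  revert z; decide

section GlobalMap

variable {G : Type*} [AddGroupWithOne G]

def f18Global (c : G → Fin 3) (i : G) : Fin 3 := f18 (c (i - 1)) (c i) (c (i + 1))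

def f18GlobalInv (w : G → Fin 3) (i : G) : Fin 3 :=
  if w (i - 1 - 1) = 2 then Equiv.swap 0 1 (w (i - 1)) else w (i - 1)

lemma f18Global_apply (c : G → Fin 3) (i : G) :
    f18Global c i = if c i = 2 then Equiv.swap 0 1 (c (i + 1)) else c (i + 1) :=
  f18_eq_ite ..

lemma f18Global_eq_two_iff {c : G → Fin 3} {i : G} : f18Global c i = 2 ↔ c (i + 1) = 2 := by
  rw [f18Global_apply]; split_ifs <;> simp [swap_zero_one_eq_two_iff]

lemma f18GlobalInv_eq_two_iff {w : G → Fin 3} {i : G} :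
    f18GlobalInv w i = 2 ↔ w (i - 1) = 2 := by
  unfold f18GlobalInv; split_ifs <;> simp [swap_zero_one_eq_two_iff]

lemma leftInverse_f18GlobalInv : Function.LeftInverse (f18GlobalInv (G := G)) f18Global := by
  intro c; funext i
  simp only [f18GlobalInv, f18Global_eq_two_iff]
  simp only [f18Global_apply, sub_add_cancel]
  split_ifs <;> simp

lemma rightInverse_f18GlobalInv : Function.RightInverse (f18GlobalInv (G := G)) f18Global := by
  intro w; funext i
  simp only [f18Global_apply, f18GlobalInv_eq_two_iff]
  simp only [f18GlobalInv, add_sub_cancel_right]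
  split_ifs <;> simp

end GlobalMap

theorem stmt_18_general (n : ℕ) :
    Function.Bijective
      (fun (c : ZMod n → Fin 3) (i : ZMod n) => f18 (c (i - 1)) (c i) (c (i + 1))) :=
  ⟨leftInverse_f18GlobalInv.injective, rightInverse_f18GlobalInv.surjective⟩

theorem stmt_18 (n : ℕ) (hn : 3 ≤ n) :
    Function.Bijective
      (fun (c : ZMod n → Fin 3) (i : ZMod n) => f18 (c (i - 1)) (c i) (c (i + 1))) :=
  stmt_18_general n
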